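/- The intersection of Ω_k over all k ∈ ℕ contains every control invariant subset of Ξ; and if U is compact, Ξ is closed, and the map (ξ,u) ↦ Aξ + Bu is continuous (which it is, being linear), then Ω_∞ = ⋂_k Ω_k is itself control invariant. -/
import Mathlib

/-- If `U` is compact, `C` is closed, and `f` is continuous, then the set of
`x` such that `f (x, u) ∈ C` for some `u ∈ U` is closed. -/
lemma closed_exists_ctrl {X Y Z : Type*} [TopologicalSpace X] [TopologicalSpace Y]
    [TopologicalSpace Z] (f : X × Y → Z) (hf : Continuous f)
    (U : Set Y) (hU : IsCompact U) (C : Set Z) (hC : IsClosed C) :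
    IsClosed {x : X | ∃ u ∈ U, f (x, u) ∈ C} := by
  haveI : CompactSpace ↥U := isCompact_iff_compactSpace.mp hU
  have key : {x : X | ∃ u ∈ U, f (x, u) ∈ C} =
      Prod.fst '' {p : X × ↥U | f (p.1, (p.2 : Y)) ∈ C} := by
    ext x
    constructor
    · rintro ⟨u, huU, hu⟩
      exact ⟨(x, ⟨u, huU⟩), hu, rfl⟩
    · rintro ⟨⟨x', u⟩, hp, rfl⟩
      exact ⟨(u : Y), u.2, hp⟩
  rw [key]
  apply isClosedMap_fst_of_compactSpace
  exact hC.preimage (hf.comp (continuous_fst.prodMk (continuous_subtype_val.comp continuous_snd)))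

theorem omega_infinity_invariant
    (n m : ℕ)
    (A : Matrix (Fin n) (Fin n) ℝ) (B : Matrix (Fin n) (Fin m) ℝ)
    (U : Set (Fin m → ℝ)) (hUc : IsCompact U) (hUne : U.Nonempty)
    (Ξ : Set (Fin n → ℝ)) (hΞ : IsClosed Ξ)
    (Ω : ℕ → Set (Fin n → ℝ))
    (hΩ0 : Ω 0 = Ξ)
    (hΩ : ∀ j, Ω (j + 1) =
      {ξ ∈ Ξ | ∃ u ∈ U, A.mulVec ξ + B.mulVec u ∈ Ω j} ∩ Ω j)
    (Ωinf : Set (Fin n → ℝ)) (hΩinf : Ωinf = ⋂ j, Ω j) :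
    (∀ S : Set (Fin n → ℝ), S ⊆ Ξ →
        (∀ ξ ∈ S, ∃ u ∈ U, A.mulVec ξ + B.mulVec u ∈ S) → S ⊆ Ωinf) ∧
    (∀ ξ ∈ Ωinf, ∃ u ∈ U, A.mulVec ξ + B.mulVec u ∈ Ωinf) := by
  subst hΩinf
  -- the dynamics map is continuous
  have hA : Continuous (A.mulVecLin) := LinearMap.continuous_of_finiteDimensional _
  have hB : Continuous (B.mulVecLin) := LinearMap.continuous_of_finiteDimensional _
  have hf : Continuous (fun p : (Fin n → ℝ) × (Fin m → ℝ) =>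
      A.mulVec p.1 + B.mulVec p.2) := by
    have : (fun p : (Fin n → ℝ) × (Fin m → ℝ) => A.mulVec p.1 + B.mulVec p.2) =
        fun p => A.mulVecLin p.1 + B.mulVecLin p.2 := by
      funext p; simp [Matrix.mulVecLin_apply]
    rw [this]
    exact (hA.comp continuous_fst).add (hB.comp continuous_snd)
  -- Ω is antitone (successive)
  have hmono : ∀ j, Ω (j + 1) ⊆ Ω j := by
    intro j
    rw [hΩ j]; exact Set.inter_subset_right
  -- each Ω j is closed
  have hclosed : ∀ j, IsClosed (Ω j) := by
    intro j
    induction j with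
    | zero => rw [hΩ0]; exact hΞ
    | succ j ih =>
      rw [hΩ j]
      refine IsClosed.inter (IsClosed.inter hΞ ?_) ih
      exact closed_exists_ctrl _ hf U hUc (Ω j) ih
  constructor
  · intro S hSΞ hSinv
    have h : ∀ j, S ⊆ Ω j := by
      intro j
      induction j with
      | zero => rw [hΩ0]; exact hSΞ
      | succ j ih =>
        rw [hΩ j]
        intro ξ hξ
        obtain ⟨u, hu, hmem⟩ := hSinv ξ hξ
        exact ⟨⟨hSΞ hξ, u, hu, ih hmem⟩, ih hξ⟩
    exact Set.subset_iInter h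
  · intro ξ hξ
    simp only [Set.mem_iInter] at hξ
    set K : ℕ → Set (Fin m → ℝ) :=
      fun j => {u ∈ U | A.mulVec ξ + B.mulVec u ∈ Ω j} with hK
    have hKne : ∀ j, (K j).Nonempty := by
      intro j
      have := hξ (j + 1)
      rw [hΩ j] at this
      obtain ⟨⟨_, u, hu, hmem⟩, _⟩ := this
      exact ⟨u, hu, hmem⟩
    have hKcl : ∀ j, IsClosed (K j) := by
      intro j
      have hcont : Continuous (fun u : Fin m → ℝ => A.mulVec ξ + B.mulVec u) :=
        hf.comp (Continuous.prodMk_right ξ)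
      exact hUc.isClosed.inter ((hclosed j).preimage hcont)
    have hKd : ∀ j, K (j + 1) ⊆ K j := fun j u hu => ⟨hu.1, hmono j hu.2⟩
    have hK0 : IsCompact (K 0) := hUc.of_isClosed_subset (hKcl 0) (fun u hu => hu.1)
    obtain ⟨u, hu⟩ := IsCompact.nonempty_iInter_of_sequence_nonempty_isCompact_isClosed
      K hKd hKne hK0 hKcl
    simp only [Set.mem_iInter] at hu
    refine ⟨u, (hu 0).1, ?_⟩
    simp only [Set.mem_iInter]
    exact fun j => (hu j).2
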